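/- For the block vector ṽ = [√(1−γ²)·v; γ] with |γ| ≤ 1 and v ∈ C ⊆ ℝ^p of unit norm, and the concatenated matrix [X 1] ∈ ℝ^{n×(p+1)} (X with rows x_i, 1 the all-ones vector), one has ‖[X 1]ṽ‖² ≥ min{min_{v∈C}‖Xv‖², n} − 2n·sup_{v∈C}|v^T x̄|, where x̄ = (1/n)∑_i x_i. -/

import Mathlib

open Matrix

theorem stmt_5 {n p : ℕ} (X : Matrix (Fin n) (Fin p) ℝ)
    (C : Set (Fin p → ℝ)) (hCunit : ∀ u ∈ C, ∑ j, (u j) ^ 2 = 1)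
    (hBdd : BddAbove {r : ℝ | ∃ u ∈ C, r = |u ⬝ᵥ (fun j => (n : ℝ)⁻¹ * ∑ i, X i j)|})
    (v : Fin p → ℝ) (hv : v ∈ C) (γ : ℝ) (hγ : |γ| ≤ 1) :
    min (sInf {r : ℝ | ∃ u ∈ C, r = ∑ i, (X.mulVec u i) ^ 2}) (n : ℝ) -
      2 * n * sSup {r : ℝ | ∃ u ∈ C, r = |u ⬝ᵥ (fun j => (n : ℝ)⁻¹ * ∑ i, X i j)|} ≤
    ∑ i, ((Matrix.of fun i => Fin.snoc (X i) (1 : ℝ)).mulVec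
        (Fin.snoc (Real.sqrt (1 - γ ^ 2) • v) γ) i) ^ 2 := by
  set s := Real.sqrt (1 - γ ^ 2) with hs
  have hγ2 : γ ^ 2 ≤ 1 := by
    have := abs_nonneg γ
    nlinarith [sq_abs γ]
  have hs0 : 0 ≤ s := Real.sqrt_nonneg _
  have hs2 : s ^ 2 = 1 - γ ^ 2 := Real.sq_sqrt (by linarith)
  have hs1 : s ≤ 1 := by nlinarith
  set A := ∑ i, (X.mulVec v i) ^ 2 with hA
  set t := v ⬝ᵥ (fun j => (n : ℝ)⁻¹ * ∑ i, X i j) with ht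
  set M := sSup {r : ℝ | ∃ u ∈ C, r = |u ⬝ᵥ (fun j => (n : ℝ)⁻¹ * ∑ i, X i j)|} with hM
  -- rewrite RHS
  have hrow : ∀ i, (Matrix.of fun i => Fin.snoc (X i) (1 : ℝ)).mulVec
      (Fin.snoc (s • v) γ) i = s * X.mulVec v i + γ := by
    intro i
    simp only [Matrix.mulVec, dotProduct, Matrix.of_apply]
    rw [Fin.sum_univ_castSucc]
    simp only [Fin.snoc_castSucc, Fin.snoc_last, Pi.smul_apply, smul_eq_mul, one_mul]
    rw [Finset.mul_sum]
    congr 1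
    exact Finset.sum_congr rfl fun j _ => by ring
  have hS : ∑ i, X.mulVec v i = n * t := by
    rcases Nat.eq_zero_or_pos n with h0 | hpos
    · subst h0; simp
    · have hn0 : (n : ℝ) ≠ 0 := Nat.cast_ne_zero.mpr hpos.ne'
      rw [ht]
      simp only [dotProduct, Matrix.mulVec]
      rw [Finset.mul_sum]
      rw [Finset.sum_comm]
      apply Finset.sum_congr rfl
      intro j _
      have h : ∑ x, X x j * v j = (∑ x, X x j) * v j := (Finset.sum_mul ..).symm
      rw [h]
      field_simp
  have hRHS : ∑ i, ((Matrix.of fun i => Fin.snoc (X i) (1 : ℝ)).mulVec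
      (Fin.snoc (s • v) γ) i) ^ 2 = s ^ 2 * A + 2 * s * γ * (n * t) + γ ^ 2 * n := by
    have : ∀ i, ((Matrix.of fun i => Fin.snoc (X i) (1 : ℝ)).mulVec
        (Fin.snoc (s • v) γ) i) ^ 2
        = s ^ 2 * (X.mulVec v i) ^ 2 + 2 * s * γ * X.mulVec v i + γ ^ 2 := by
      intro i; rw [hrow i]; ring
    rw [Finset.sum_congr rfl fun i _ => this i]
    rw [Finset.sum_add_distrib, Finset.sum_add_distrib, ← Finset.mul_sum, ← Finset.mul_sum,
      hS, ← hA, Finset.sum_const, Finset.card_univ, Fintype.card_fin, nsmul_eq_mul]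
    ring
  rw [hRHS]
  -- bounds
  have hAmem : A ∈ {r : ℝ | ∃ u ∈ C, r = ∑ i, (X.mulVec u i) ^ 2} := ⟨v, hv, rfl⟩
  have hbb : BddBelow {r : ℝ | ∃ u ∈ C, r = ∑ i, (X.mulVec u i) ^ 2} := by
    refine ⟨0, ?_⟩
    rintro r ⟨u, _, rfl⟩
    exact Finset.sum_nonneg fun i _ => sq_nonneg _
  have hinfA : sInf {r : ℝ | ∃ u ∈ C, r = ∑ i, (X.mulVec u i) ^ 2} ≤ A := csInf_le hbb hAmem
  have hMt : |t| ≤ M := le_csSup hBdd ⟨v, hv, rfl⟩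
  have hA0 : 0 ≤ A := Finset.sum_nonneg fun i _ => sq_nonneg _
  have hn0 : (0 : ℝ) ≤ n := Nat.cast_nonneg n
  have ht1 : -|t| ≤ t := neg_abs_le t
  have ht2 : t ≤ |t| := le_abs_self t
  have hγ1 : -|γ| ≤ γ := neg_abs_le γ
  have hγa : γ ≤ |γ| := le_abs_self γ
  have habs0 : 0 ≤ |γ| := abs_nonneg γ
  have habst : 0 ≤ |t| := abs_nonneg t
  -- cross term bound: 2*s*γ*(n*t) ≥ -2*n*M
  have hcross : -(2 * n * M) ≤ 2 * s * γ * (n * t) := by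
    have h1 : s * |γ| ≤ 1 := by nlinarith
    have h2 : |2 * s * γ * (n * t)| ≤ 2 * n * M := by
      have : |2 * s * γ * (n * t)| = 2 * s * |γ| * (n * |t|) := by
        rw [abs_mul, abs_mul, abs_mul, abs_mul, abs_of_nonneg hs0, abs_of_nonneg hn0, abs_two]
      rw [this]
      have h3 : (n:ℝ) * |t| ≤ n * M := mul_le_mul_of_nonneg_left hMt hn0
      have h4 : s * |γ| * ((n:ℝ) * |t|) ≤ 1 * ((n:ℝ) * M) :=
        mul_le_mul h1 h3 (by positivity) zero_le_one
      linarith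
    linarith [neg_abs_le (2 * s * γ * (n * t))]
  have hmin : min (sInf {r : ℝ | ∃ u ∈ C, r = ∑ i, (X.mulVec u i) ^ 2}) (n : ℝ)
      ≤ s ^ 2 * A + γ ^ 2 * n := by
    have h1 : min (sInf {r : ℝ | ∃ u ∈ C, r = ∑ i, (X.mulVec u i) ^ 2}) (n : ℝ) ≤ A :=
      le_trans (min_le_left _ _) hinfA
    have h2 : min (sInf {r : ℝ | ∃ u ∈ C, r = ∑ i, (X.mulVec u i) ^ 2}) (n : ℝ) ≤ n :=
      min_le_right _ _
    nlinarith [sq_nonneg γ]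
  linarith
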